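/- arXiv:1810.12600 — 3 statements merged into one kernel-verified Lean document; each statement's English description precedes it below -/
import Mathlib

section
/- Let Φ be a vector in ℂ^(V × {0,…,d−1}) satisfying W Φ = e^{iφ} Φ for some real φ with 0 < φ < π, and set a_u = ⟨ψ_u, Φ⟩ for each vertex u. Then the vector (a_u)_{u∈V} satisfies the eigenvalue equation of the normalized adjacency matrix with eigenvalue cos φ: for every u ∈ V, Σ_{v∈V} A(u,v)·a_v = cos(φ)·a_u. -/
/-!
With `λ = e^{iφ}` and fibre sums `F_u = Σ_g Φ(u,g)` (so `a_u = F_u / √d`), the involution turns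
`WΦ = λΦ` into `CΦ = λ·SΦ`. The coin is the reflection in the span of the `ψ_u`, so it preserves
fibre sums: `F_u = λ Σ_g Φ(σ(u,g))`. Summing `CΦ(σ(u,g)) = λ Φ(u,g)` over `g` gives
`(2/d) Σ_g F_{σ(u,g).1} − Σ_g Φ(σ(u,g)) = λ F_u`; eliminating the middle sum leaves
`(2/d) Σ_g F_{σ(u,g).1} = (λ + λ⁻¹) F_u = 2 cos φ · F_u`, which is the adjacency equation.
-/

open scoped InnerProductSpace
open Complex

/-- The coin state `ψ_u = (1/√d) Σ_g e_{(u,g)}`. -/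
noncomputable def psiState (V : Type*) [Fintype V] [DecidableEq V] (d : ℕ) (u : V) :
    EuclideanSpace ℂ (V × Fin d) :=
  WithLp.toLp 2 (fun x : V × Fin d => if x.1 = u then ((1 / Real.sqrt d : ℝ) : ℂ) else 0)

/-- The coin operator `C = 2 Σ_u |ψ_u⟩⟨ψ_u| − I` applied to a vector. -/
noncomputable def coinOp {V : Type*} [Fintype V] [DecidableEq V] {d : ℕ}
    (Φ : EuclideanSpace ℂ (V × Fin d)) : EuclideanSpace ℂ (V × Fin d) :=
  (2 : ℂ) • (∑ u : V, ⟪psiState V d u, Φ⟫_ℂ • psiState V d u) - Φ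

/-- The flip-flop walk operator `W = S C`, where `S e_x = e_{σ(x)}`. -/
noncomputable def walkOp {V : Type*} [Fintype V] [DecidableEq V] {d : ℕ}
    (σ : V × Fin d → V × Fin d) (Φ : EuclideanSpace ℂ (V × Fin d)) :
    EuclideanSpace ℂ (V × Fin d) :=
  WithLp.toLp 2 (fun x => coinOp Φ (σ x))

/-- The normalized adjacency matrix entry `A(u,v) = |{g : (σ(u,g)).1 = v}| / d`. -/
noncomputable def adjEntry {V : Type*} [Fintype V] [DecidableEq V] {d : ℕ}
    (σ : V × Fin d → V × Fin d) (u v : V) : ℝ :=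
  (Finset.univ.filter (fun g : Fin d => (σ (u, g)).1 = v)).card / d

section

variable {V : Type*} [Fintype V] [DecidableEq V] {d : ℕ}

theorem psiState_apply (u : V) (x : V × Fin d) :
    psiState V d u x = if x.1 = u then (Real.sqrt d : ℂ)⁻¹ else 0 := by
  simp [psiState]

theorem inner_psiState (u : V) (Φ : EuclideanSpace ℂ (V × Fin d)) :
    ⟪psiState V d u, Φ⟫_ℂ = (Real.sqrt d : ℂ)⁻¹ * ∑ g, Φ (u, g) := by
  rw [PiLp.inner_apply, Fintype.sum_prod_type,
    Fintype.sum_eq_single u fun v hv => by simp [psiState_apply, hv], Finset.mul_sum]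
  simp [psiState_apply, mul_comm]

theorem coinOp_apply (Φ : EuclideanSpace ℂ (V × Fin d)) (x : V × Fin d) :
    coinOp Φ x = 2 / d * ∑ g, Φ (x.1, g) - Φ x := by
  have hsqrt : (Real.sqrt d : ℂ)⁻¹ * (Real.sqrt d : ℂ)⁻¹ = (d : ℂ)⁻¹ := by
    rw [← mul_inv, ← Complex.ofReal_mul, Real.mul_self_sqrt (Nat.cast_nonneg d),
      Complex.ofReal_natCast]
  simp only [coinOp, PiLp.sub_apply, PiLp.smul_apply, WithLp.ofLp_sum, Finset.sum_apply,
    psiState_apply, smul_eq_mul, mul_ite, mul_zero, Finset.sum_ite_eq, Finset.mem_univ, if_true,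
    inner_psiState]
  linear_combination (2 * ∑ g, Φ (x.1, g)) * hsqrt

theorem sum_coinOp_apply (Φ : EuclideanSpace ℂ (V × Fin d)) (u : V) :
    ∑ g, coinOp Φ (u, g) = ∑ g, Φ (u, g) := by
  rcases Nat.eq_zero_or_pos d with rfl | hd
  · simp
  · have hd' : (d : ℂ) ≠ 0 := Nat.cast_ne_zero.mpr hd.ne'
    simp only [coinOp_apply, Finset.sum_sub_distrib, Finset.sum_const, Finset.card_univ,
      Fintype.card_fin, nsmul_eq_mul]
    field_simp
    ring

theorem sum_adjEntry_mul (σ : V × Fin d → V × Fin d) (u : V) (f : V → ℂ) :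
    ∑ v, (adjEntry σ u v : ℂ) * f v = (∑ g, f (σ (u, g)).1) / d := by
  rw [← Finset.sum_fiberwise Finset.univ (fun g => (σ (u, g)).1), Finset.sum_div]
  refine Finset.sum_congr rfl fun v _ => ?_
  rw [Finset.sum_congr rfl fun g hg => congrArg f (Finset.mem_filter.mp hg).2]
  simp [adjEntry, div_mul_eq_mul_div]

theorem walkOp_apply (σ : V × Fin d → V × Fin d) (Φ : EuclideanSpace ℂ (V × Fin d))
    (x : V × Fin d) : walkOp σ Φ x = coinOp Φ (σ x) :=
  rfl

theorem two_div_mul_sum_fiber_neighbors_of_walkOp_eq_smul {σ : V × Fin d → V × Fin d}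
    (hσ : Function.Involutive σ) {Φ : EuclideanSpace ℂ (V × Fin d)} {z : ℂ} (hz : z ≠ 0)
    (hW : walkOp σ Φ = z • Φ) (u : V) :
    2 / d * ∑ g, ∑ h, Φ ((σ (u, g)).1, h) = (z + z⁻¹) * ∑ g, Φ (u, g) := by
  have hWx (x : V × Fin d) : coinOp Φ (σ x) = z * Φ x := by
    rw [← walkOp_apply, hW, PiLp.smul_apply, smul_eq_mul]
  have hcoin (x : V × Fin d) : coinOp Φ x = z * Φ (σ x) := by
    simpa only [hσ x] using hWx (σ x)
  have hfiber : ∑ g, Φ (u, g) = z * ∑ g, Φ (σ (u, g)) := by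
    rw [← sum_coinOp_apply, Finset.mul_sum]
    exact Finset.sum_congr rfl fun g _ => hcoin (u, g)
  have hneighbors : ∑ g, coinOp Φ (σ (u, g)) = z * ∑ g, Φ (u, g) := by
    simp only [hWx, Finset.mul_sum]
  simp only [coinOp_apply, Finset.sum_sub_distrib, ← Finset.mul_sum] at hneighbors
  linear_combination hneighbors - z⁻¹ * hfiber - (∑ g, Φ (σ (u, g))) * inv_mul_cancel₀ hz

end

theorem walk_eigenvector_gives_adjacency_eigenvector_general
    {V : Type*} [Fintype V] [DecidableEq V] {d : ℕ}
    (σ : V × Fin d → V × Fin d) (hσ : ∀ x, σ (σ x) = x)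
    (Φ : EuclideanSpace ℂ (V × Fin d)) (φ : ℝ)
    (hW : walkOp σ Φ = Complex.exp (φ * Complex.I) • Φ)
    (a : V → ℂ) (ha : ∀ u, a u = ⟪psiState V d u, Φ⟫_ℂ) :
    ∀ u : V, ∑ v : V, (adjEntry σ u v : ℂ) * a v = (Real.cos φ : ℂ) * a u := by
  intro u
  have hcos : exp (φ * I) + (exp (φ * I))⁻¹ = 2 * (Real.cos φ : ℂ) := by
    rw [← Complex.exp_neg, ← neg_mul, ← Complex.two_cos, Complex.ofReal_cos]
  have key := two_div_mul_sum_fiber_neighbors_of_walkOp_eq_smul hσ (exp_ne_zero _) hW u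
  rw [hcos] at key
  simp only [ha, inner_psiState, sum_adjEntry_mul, ← Finset.mul_sum]
  linear_combination (Real.sqrt d : ℂ)⁻¹ / 2 * key

/-- If `W Φ = e^{iφ} Φ` with `0 < φ < π` and `a_u = ⟨ψ_u, Φ⟩`, then
`Σ_v A(u,v) a_v = cos(φ) a_u` for every vertex `u`. -/
theorem walk_eigenvector_gives_adjacency_eigenvector
    {V : Type*} [Fintype V] [DecidableEq V] [Nonempty V] {d : ℕ} (hd : 1 ≤ d)
    (σ : V × Fin d → V × Fin d) (hσ : ∀ x, σ (σ x) = x)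
    (Φ : EuclideanSpace ℂ (V × Fin d)) (φ : ℝ) (hφ0 : 0 < φ) (hφπ : φ < Real.pi)
    (hW : walkOp σ Φ = Complex.exp (φ * Complex.I) • Φ)
    (a : V → ℂ) (ha : ∀ u, a u = ⟪psiState V d u, Φ⟫_ℂ) :
    ∀ u : V, ∑ v : V, (adjEntry σ u v : ℂ) * a v = (Real.cos φ : ℂ) * a u :=
  walk_eigenvector_gives_adjacency_eigenvector_general σ hσ Φ φ hW a ha
end

section
/- Assume the rotation map σ has no fixed points. Let Φ be a unit vector in ℂ^(V × {0,…,d−1}) satisfying W Φ = e^{iφ} Φ for some real φ with 0 < φ < π. Then Σ_{u∈V} |⟨ψ_u, Φ⟩|² = 1/2. -/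
open scoped InnerProductSpace
open Complex

/-!
Write `S` for the shift and `λ = e^{iφ}`. Since `S` is an involution, `W Φ = λ Φ` means
`C Φ = λ S Φ`, so `⟪Φ, C Φ⟫ = λ ⟪Φ, S Φ⟫`. Both inner products are real:
`⟪Φ, C Φ⟫ = 2 Σ_u |⟨ψ_u, Φ⟩|² - 1`, and `S` is a self-adjoint permutation. As `λ` is not
real, both vanish.
-/

noncomputable def shiftOp {ι : Type*} (σ : ι → ι) (Φ : EuclideanSpace ℂ ι) :
    EuclideanSpace ℂ ι :=
  WithLp.toLp 2 (fun x => Φ (σ x))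

theorem walkOp_eq_shiftOp_coinOp {V : Type*} [Fintype V] [DecidableEq V] {d : ℕ}
    (σ : V × Fin d → V × Fin d) (Φ : EuclideanSpace ℂ (V × Fin d)) :
    walkOp σ Φ = shiftOp σ (coinOp Φ) :=
  rfl

theorem shiftOp_shiftOp_of_involutive {ι : Type*} {σ : ι → ι} (hσ : Function.Involutive σ)
    (Φ : EuclideanSpace ℂ ι) : shiftOp σ (shiftOp σ Φ) = Φ := by
  ext x
  simp only [shiftOp, PiLp.toLp_apply, hσ x]

theorem inner_shiftOp_self_im_eq_zero {ι : Type*} [Fintype ι] {σ : ι → ι}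
    (hσ : Function.Involutive σ) (Φ : EuclideanSpace ℂ ι) :
    (⟪Φ, shiftOp σ Φ⟫_ℂ).im = 0 := by
  rw [← Complex.conj_eq_iff_im, PiLp.inner_apply, map_sum]
  refine Fintype.sum_equiv hσ.toPerm _ _ fun x => ?_
  simp only [shiftOp, PiLp.toLp_apply, RCLike.inner_apply, Function.Involutive.coe_toPerm,
    map_mul, Complex.conj_conj, hσ x]
  ring

theorem inner_coinOp_self {V : Type*} [Fintype V] [DecidableEq V] {d : ℕ}
    (Φ : EuclideanSpace ℂ (V × Fin d)) :
    ⟪Φ, coinOp Φ⟫_ℂ = ((2 * ∑ u : V, ‖⟪psiState V d u, Φ⟫_ℂ‖ ^ 2 - ‖Φ‖ ^ 2 : ℝ) : ℂ) := by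
  have hterm (u : V) :
      ⟪Φ, ⟪psiState V d u, Φ⟫_ℂ • psiState V d u⟫_ℂ = ((‖⟪psiState V d u, Φ⟫_ℂ‖ ^ 2 : ℝ) : ℂ) := by
    rw [inner_smul_right, ← inner_conj_symm Φ, Complex.mul_conj, Complex.normSq_eq_norm_sq]
  have hself : ⟪Φ, Φ⟫_ℂ = ((‖Φ‖ ^ 2 : ℝ) : ℂ) := by exact_mod_cast inner_self_eq_norm_sq_to_K Φ
  rw [coinOp, inner_sub_right, inner_smul_right, inner_sum, Finset.sum_congr rfl fun u _ => hterm u,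
    hself]
  push_cast
  ring

theorem coinOp_eq_smul_shiftOp_of_walkOp_eq_smul {V : Type*} [Fintype V] [DecidableEq V] {d : ℕ}
    {σ : V × Fin d → V × Fin d} (hσ : Function.Involutive σ) {Φ : EuclideanSpace ℂ (V × Fin d)}
    {μ : ℂ} (hW : walkOp σ Φ = μ • Φ) : coinOp Φ = μ • shiftOp σ Φ := by
  rw [← shiftOp_shiftOp_of_involutive hσ (coinOp Φ), ← walkOp_eq_shiftOp_coinOp, hW]
  rfl

theorem eq_zero_of_eq_exp_mul_of_im_eq_zero {a b : ℂ} {φ : ℝ} (ha : a.im = 0) (hb : b.im = 0)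
    (h : a = Complex.exp (φ * Complex.I) * b) (hφ : Real.sin φ ≠ 0) : b = 0 := by
  have him := congrArg Complex.im h
  rw [ha, Complex.mul_im, Complex.exp_ofReal_mul_I_re, Complex.exp_ofReal_mul_I_im, hb] at him
  exact Complex.ext (by simpa [hφ] using him.symm) hb

theorem walk_eigenvector_projection_half_general
    {V : Type*} [Fintype V] [DecidableEq V] {d : ℕ}
    (σ : V × Fin d → V × Fin d) (hσ : ∀ x, σ (σ x) = x)
    (Φ : EuclideanSpace ℂ (V × Fin d)) (hΦ : ‖Φ‖ = 1)
    (φ : ℝ) (hφ0 : 0 < φ) (hφπ : φ < Real.pi)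
    (hW : walkOp σ Φ = Complex.exp (φ * Complex.I) • Φ) :
    ∑ u : V, ‖⟪psiState V d u, Φ⟫_ℂ‖ ^ 2 = 1 / 2 := by
  have hcoin : ⟪Φ, coinOp Φ⟫_ℂ = Complex.exp (φ * Complex.I) * ⟪Φ, shiftOp σ Φ⟫_ℂ := by
    rw [coinOp_eq_smul_shiftOp_of_walkOp_eq_smul hσ hW, inner_smul_right]
  have hshift : ⟪Φ, shiftOp σ Φ⟫_ℂ = 0 :=
    eq_zero_of_eq_exp_mul_of_im_eq_zero (by rw [inner_coinOp_self]; exact Complex.ofReal_im _)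
      (inner_shiftOp_self_im_eq_zero hσ Φ) hcoin (Real.sin_pos_of_pos_of_lt_pi hφ0 hφπ).ne'
  rw [hshift, mul_zero, inner_coinOp_self, hΦ, Complex.ofReal_eq_zero] at hcoin
  linarith

/-- If `σ` has no fixed points and `Φ` is a unit vector with `W Φ = e^{iφ} Φ`,
`0 < φ < π`, then `Σ_u |⟨ψ_u, Φ⟩|² = 1/2`. -/
theorem walk_eigenvector_projection_half
    {V : Type*} [Fintype V] [DecidableEq V] [Nonempty V] {d : ℕ} (hd : 1 ≤ d)
    (σ : V × Fin d → V × Fin d) (hσ : ∀ x, σ (σ x) = x) (hfix : ∀ x, σ x ≠ x)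
    (Φ : EuclideanSpace ℂ (V × Fin d)) (hΦ : ‖Φ‖ = 1)
    (φ : ℝ) (hφ0 : 0 < φ) (hφπ : φ < Real.pi)
    (hW : walkOp σ Φ = Complex.exp (φ * Complex.I) • Φ) :
    ∑ u : V, ‖⟪psiState V d u, Φ⟫_ℂ‖ ^ 2 = 1 / 2 :=
  walk_eigenvector_projection_half_general σ hσ Φ hΦ φ hφ0 hφπ hW
end

section
/- Let Φ be a vector in ℂ^(V × {0,…,d−1}) satisfying W Φ = e^{iφ} Φ for some real φ with 0 < φ < π, and set a_u = Σ_g conj(Φ(u,g))/√d. Then for every x ∈ V × {0,…,d−1}, writing u for the vertex of x and v for the vertex of σ(x): conj(Φ(x)) + conj(Φ(σ(x))) = (2/√d)·(a_u + a_v)/(1 + e^{−iφ}) and conj(Φ(x)) − conj(Φ(σ(x))) = (2/√d)·(a_u − a_v)/(1 − e^{−iφ}). -/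
open scoped InnerProductSpace
open Complex

lemma coinOp_apply_s18 {V : Type*} [Fintype V] [DecidableEq V] {d : ℕ}
    (Φ : EuclideanSpace ℂ (V × Fin d)) (y : V × Fin d) :
    coinOp Φ y = 2 * (⟪psiState V d y.1, Φ⟫_ℂ * ((1 / Real.sqrt d : ℝ) : ℂ)) - Φ y := by
  simp only [coinOp, PiLp.sub_apply, PiLp.smul_apply, smul_eq_mul]
  rw [show (∑ u : V, ⟪psiState V d u, Φ⟫_ℂ • psiState V d u) y
      = ∑ u : V, ⟪psiState V d u, Φ⟫_ℂ * psiState V d u y by rw [WithLp.ofLp_sum, Finset.sum_apply]; rfl]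
  rw [Finset.sum_eq_single y.1]
  · simp [psiState]
  · intro b _ hb
    simp [psiState, Ne.symm hb]
  · simp

/-- If `W Φ = e^{iφ} Φ` with `0 < φ < π`, and
`a_u = Σ_g conj(Φ(u,g))/√d = ⟨Φ, ψ_u⟩`, then for every `x`, with `u` the vertex of `x` and
`v` the vertex of `σ(x)`:
`conj(Φ(x)) + conj(Φ(σ x)) = (2/√d)(a_u + a_v)/(1 + e^{−iφ})` and
`conj(Φ(x)) − conj(Φ(σ x)) = (2/√d)(a_u − a_v)/(1 − e^{−iφ})`. -/
theorem walk_eigenvector_path_components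
    {V : Type*} [Fintype V] [DecidableEq V] [Nonempty V] {d : ℕ} (hd : 1 ≤ d)
    (σ : V × Fin d → V × Fin d) (hσ : ∀ x, σ (σ x) = x)
    (Φ : EuclideanSpace ℂ (V × Fin d)) (φ : ℝ) (hφ0 : 0 < φ) (hφπ : φ < Real.pi)
    (hW : walkOp σ Φ = Complex.exp (φ * Complex.I) • Φ)
    (a : V → ℂ) (ha : ∀ u, a u = ⟪Φ, psiState V d u⟫_ℂ) :
    ∀ x : V × Fin d,
      (starRingEnd ℂ) (Φ x) + (starRingEnd ℂ) (Φ (σ x)) =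
        ((2 / Real.sqrt d : ℝ) : ℂ) * ((a x.1 + a (σ x).1) /
          (1 + Complex.exp (-(φ * Complex.I)))) ∧
      (starRingEnd ℂ) (Φ x) - (starRingEnd ℂ) (Φ (σ x)) =
        ((2 / Real.sqrt d : ℝ) : ℂ) * ((a x.1 - a (σ x).1) /
          (1 - Complex.exp (-(φ * Complex.I)))) := by
  intro x
  have hsin : Real.sin φ ≠ 0 := ne_of_gt (Real.sin_pos_of_pos_of_lt_pi hφ0 hφπ)
  set α : ℂ := Complex.exp (-(φ * Complex.I)) with hα
  have hαim : α.im = -Real.sin φ := by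
    rw [hα, show -((φ:ℂ) * Complex.I) = ((-φ : ℝ) : ℂ) * Complex.I by push_cast; ring,
      Complex.exp_ofReal_mul_I_im]
    simp
  have h1 : (1 : ℂ) + α ≠ 0 := by
    intro h
    have hα1 : α = -1 := by linear_combination h
    rw [hα1] at hαim
    simp at hαim
    exact hsin hαim
  have h2 : (1 : ℂ) - α ≠ 0 := by
    intro h
    have hα1 : α = 1 := by linear_combination -h
    rw [hα1] at hαim
    simp at hαim
    exact hsin hαim
  -- key pointwise equation
  have key : ∀ y : V × Fin d,
      2 * (a (σ y).1 * ((1 / Real.sqrt d : ℝ) : ℂ)) - (starRingEnd ℂ) (Φ (σ y))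
        = α * (starRingEnd ℂ) (Φ y) := by
    intro y
    have h := congrFun (congrArg WithLp.ofLp hW) y
    rw [show walkOp σ Φ y = coinOp Φ (σ y) from rfl, coinOp_apply_s18] at h
    rw [show (Complex.exp ((φ:ℂ) * Complex.I) • Φ) y
        = Complex.exp ((φ:ℂ) * Complex.I) * Φ y from rfl] at h
    have h' := congrArg (starRingEnd ℂ) h
    simp only [map_sub, map_mul, map_ofNat, Complex.conj_ofReal] at h'
    rw [← Complex.exp_conj] at h'
    rw [show (starRingEnd ℂ) ((φ:ℂ) * Complex.I) = -((φ:ℂ) * Complex.I) by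
      simp [Complex.conj_I]] at h'
    rw [ha, ← inner_conj_symm]
    exact h'
  have eq1 := key x
  have eq2 := key (σ x)
  rw [hσ] at eq2
  have hc : ((2 / Real.sqrt d : ℝ) : ℂ) = 2 * ((1 / Real.sqrt d : ℝ) : ℂ) := by
    push_cast; ring
  constructor
  · rw [mul_div_assoc', eq_comm, div_eq_iff h1]
    linear_combination eq1 + eq2 + (a x.1 + a (σ x).1) * hc
  · rw [mul_div_assoc', eq_comm, div_eq_iff h2]
    linear_combination eq2 - eq1 + (a x.1 - a (σ x).1) * hc
end
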